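/- arXiv:1302.6768 — 5 statements merged into one kernel-verified Lean document; each statement's English description precedes it below -/
import Mathlib

section
/- (Pinching theorem.) Let N be a function from n×n complex matrices to the reals satisfying the norm axioms N(A + B) ≤ N(A) + N(B) and N(c • A) = |c| · N(A) for all complex scalars c, and which is unitarily similarity-invariant: N(U * A * Uᴴ) = N(A) for every unitary matrix U. Then for every n×n complex matrix A, N of the diagonal part of A is at most N(A): N(Matrix.diagonal (fun i => A i i)) ≤ N(A). -/
/-!
Let `ζ = exp (2πi/n)` and let `D = diag (1, ζ, …, ζ ^ (n - 1))` be the clock matrix, which is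
unitary. Conjugation by `D ^ k` multiplies the `(i, j)` entry of `A` by `(ζ ^ i / ζ ^ j) ^ k`, so by
orthogonality of the `n`-th roots of unity the average of the `n` conjugates `D ^ k * A * (D ^ k)ᴴ`
is the diagonal part of `A`. Each conjugate has the same value of `N` as `A`, and `N` of an average
is at most the largest value of `N` on its terms.
-/

open Matrix Finset

theorem IsPrimitiveRoot.sum_range_pow_div_pow {K : Type*} [Field K] {ζ : K} {n : ℕ}
    (hζ : IsPrimitiveRoot ζ n) {i j : ℕ} (hi : i < n) (hj : j < n) :
    ∑ k ∈ range n, (ζ ^ i / ζ ^ j) ^ k = if i = j then (n : K) else 0 := by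
  have hζ0 : ζ ≠ 0 := hζ.ne_zero (by omega)
  split_ifs with hij
  · simp [hij, hζ0]
  · have hne : ζ ^ i / ζ ^ j ≠ 1 := fun h =>
      hij (hζ.pow_inj hi hj ((div_eq_one_iff_eq (pow_ne_zero _ hζ0)).mp h))
    have hpow : (ζ ^ i / ζ ^ j) ^ n = 1 := by
      rw [div_pow, ← pow_mul, ← pow_mul, pow_mul', pow_mul', hζ.pow_eq_one, one_pow, one_pow,
        div_one]
    rw [geom_sum_eq hne, hpow, sub_self, zero_div]

namespace Matrix

variable {n : ℕ}

def clockMatrix {R : Type*} [CommSemiring R] (ζ : R) : Matrix (Fin n) (Fin n) R :=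
  diagonal fun i => ζ ^ (i : ℕ)

section CommSemiring

variable {R : Type*} [CommSemiring R]

theorem clockMatrix_one : (clockMatrix (1 : R) : Matrix (Fin n) (Fin n) R) = 1 := by
  simp [clockMatrix]

theorem clockMatrix_mul_clockMatrix (a b : R) :
    (clockMatrix a : Matrix (Fin n) (Fin n) R) * clockMatrix b = clockMatrix (a * b) := by
  simp only [clockMatrix, diagonal_mul_diagonal, mul_pow]

theorem conjTranspose_clockMatrix [StarRing R] (ζ : R) :
    (clockMatrix ζ : Matrix (Fin n) (Fin n) R)ᴴ = clockMatrix (star ζ) := by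
  simp only [clockMatrix, diagonal_conjTranspose, Pi.star_def, star_pow]

end CommSemiring

theorem sum_clockMatrix_mul_mul_clockMatrix_inv {K : Type*} [Field K] {ζ : K}
    (hζ : IsPrimitiveRoot ζ n) (A : Matrix (Fin n) (Fin n) K) :
    ∑ k ∈ range n, clockMatrix (ζ ^ k) * A * clockMatrix (ζ ^ k)⁻¹ = (n : K) • diagonal A.diag := by
  ext i j
  have hentry : ∀ k, (clockMatrix (ζ ^ k) * A * clockMatrix (ζ ^ k)⁻¹ : Matrix (Fin n) (Fin n) K)
      i j = (ζ ^ (i : ℕ) / ζ ^ (j : ℕ)) ^ k * A i j := fun k => by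
    simp only [clockMatrix, mul_diagonal, diagonal_mul, inv_pow, div_pow, ← pow_mul]
    ring
  simp only [sum_apply, hentry, ← sum_mul, hζ.sum_range_pow_div_pow i.isLt j.isLt, Fin.val_inj,
    smul_apply, diagonal_apply, diag_apply, smul_eq_mul]
  split_ifs with hij <;> simp [hij]

theorem conjTranspose_clockMatrix_mul_self {z : ℂ} (hz : ‖z‖ = 1) :
    (clockMatrix z : Matrix (Fin n) (Fin n) ℂ)ᴴ * clockMatrix z = 1 := by
  rw [conjTranspose_clockMatrix, clockMatrix_mul_clockMatrix, Complex.star_def,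
    ← Complex.inv_eq_conj hz, inv_mul_cancel₀ (norm_ne_zero_iff.mp (hz ▸ one_ne_zero)),
    clockMatrix_one]

end Matrix

theorem Seminorm.map_inv_card_smul_sum_le {𝕜 E ι : Type*} [RCLike 𝕜] [AddCommGroup E]
    [Module 𝕜 E] (p : Seminorm 𝕜 E) {s : Finset ι} (hs : s.Nonempty) (f : ι → E) {c : ℝ}
    (hf : ∀ i ∈ s, p (f i) ≤ c) : p ((#s : 𝕜)⁻¹ • ∑ i ∈ s, f i) ≤ c := by
  have hsum : p (∑ i ∈ s, f i) ≤ #s * c :=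
    (le_sum_of_subadditive p (map_zero p).le (map_add_le_add p) s f).trans
      (by simpa using sum_le_card_nsmul s (p ∘ f) c hf)
  rw [map_smul_eq_mul, norm_inv, RCLike.norm_natCast,
    inv_mul_le_iff₀ (by exact_mod_cast hs.card_pos)]
  exact hsum

theorem Seminorm.map_diagonal_diag_le {n : ℕ} (p : Seminorm ℂ (Matrix (Fin n) (Fin n) ℂ))
    (hp : ∀ U A : Matrix (Fin n) (Fin n) ℂ, Uᴴ * U = 1 → p (U * A * Uᴴ) = p A)
    (A : Matrix (Fin n) (Fin n) ℂ) : p (diagonal A.diag) ≤ p A := by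
  rcases Nat.eq_zero_or_pos n with rfl | hn
  · rw [Subsingleton.elim (diagonal _) A]
  have hζ := Complex.isPrimitiveRoot_exp n hn.ne'
  set ζ := Complex.exp (2 * Real.pi * Complex.I / n)
  have hnorm : ∀ k, ‖ζ ^ k‖ = 1 := fun k => by rw [norm_pow, hζ.norm'_eq_one hn.ne', one_pow]
  have hpinch : diagonal A.diag =
      (#(range n) : ℂ)⁻¹ • ∑ k ∈ range n, clockMatrix (ζ ^ k) * A * (clockMatrix (ζ ^ k))ᴴ := by
    simp only [conjTranspose_clockMatrix, Complex.star_def, ← Complex.inv_eq_conj (hnorm _),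
      sum_clockMatrix_mul_mul_clockMatrix_inv hζ, card_range, smul_smul,
      inv_mul_cancel₀ (Nat.cast_ne_zero.mpr hn.ne' : (n : ℂ) ≠ 0), one_smul]
  rw [hpinch]
  exact p.map_inv_card_smul_sum_le (nonempty_range_iff.mpr hn.ne') _
    fun k _ => (hp _ A (conjTranspose_clockMatrix_mul_self (hnorm k))).le

/-- **Pinching theorem.** If `N` is a (semi)norm on `n×n` complex matrices that is
invariant under unitary similarity, then `N` of the diagonal part of `A` is at most
`N A`. -/
theorem stmt_2 {n : ℕ} (N : Matrix (Fin n) (Fin n) ℂ → ℝ)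
    (hadd : ∀ A B : Matrix (Fin n) (Fin n) ℂ, N (A + B) ≤ N A + N B)
    (hsmul : ∀ (c : ℂ) (A : Matrix (Fin n) (Fin n) ℂ), N (c • A) = ‖c‖ * N A)
    (hunit : ∀ (U A : Matrix (Fin n) (Fin n) ℂ), Uᴴ * U = 1 → N (U * A * Uᴴ) = N A)
    (A : Matrix (Fin n) (Fin n) ℂ) :
    N (Matrix.diagonal (fun i => A i i)) ≤ N A :=
  (Seminorm.of N hadd hsmul).map_diagonal_diag_le hunit A
end

section
/- (Minimization of the Frobenius norm under a spectral norm constraint.) Let M be an n×n complex matrix with singular value decomposition M = U * Matrix.diagonal (fun i => (σ i : ℂ)) * Vᴴ, where U and V are unitary and σ i ≥ 0 for all i, and let λ ≥ 0. Define X := U * Matrix.diagonal (fun i => (min (σ i) λ : ℂ)) * Vᴴ. Then ‖X‖₂ ≤ λ, and for every n×n complex matrix Z with ‖Z‖₂ ≤ λ one has ‖X − M‖_F ≤ ‖Z − M‖_F. -/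
/-!
Both norms are unitarily invariant, so conjugating by the singular vectors reduces the
statement to `M = diagonal σ`. There `X` is diagonal with entries `min (σ i) λ`, whose
spectral norm is their maximum. A competitor `W` with `‖W‖₂ ≤ λ` has `‖W i i‖ ≤ λ`, hence
`‖W i i - σ i‖ ≥ σ i - λ`, and `‖W - M‖_F²` is at least the sum of these diagonal terms,
which dominates `∑ i (σ i - min (σ i) λ)² = ‖X - M‖_F²`.
-/

open Matrix

/-- Frobenius norm of a complex matrix. -/
noncomputable def frobNorm {n : ℕ} (A : Matrix (Fin n) (Fin n) ℂ) : ℝ :=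
  Real.sqrt (∑ i, ∑ j, ‖A i j‖ ^ 2)

/-- The spectral norm (ℓ²→ℓ² operator norm, i.e. largest singular value) of a
square complex matrix. -/
noncomputable def spectralNorm' {n : ℕ} (A : Matrix (Fin n) (Fin n) ℂ) : ℝ :=
  ‖Matrix.toEuclideanCLM (𝕜 := ℂ) A‖

open scoped Matrix.Norms.L2Operator

lemma RCLike.norm_ofReal_min_sub_le {𝕜 : Type*} [RCLike 𝕜] (s : ℝ) {lam : ℝ} {z : 𝕜}
    (hz : ‖z‖ ≤ lam) : ‖((min s lam : ℝ) : 𝕜) - s‖ ≤ ‖z - s‖ := by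
  have hfar : s - lam ≤ ‖z - s‖ :=
    calc s - lam ≤ ‖(s : 𝕜)‖ - ‖z‖ := by rw [RCLike.norm_ofReal]; linarith [le_abs_self s]
      _ ≤ ‖z - s‖ := by rw [norm_sub_rev]; exact norm_sub_norm_le _ _
  rw [← RCLike.ofReal_sub, RCLike.norm_ofReal, abs_sub_comm, abs_of_nonneg (by simp)]
  rcases min_cases s lam with ⟨h, -⟩ | ⟨h, -⟩ <;> rw [h]
  · simp
  · exact hfar

namespace Matrix

section Entrywise

variable {m n 𝕜 : Type*} [Fintype m] [Fintype n] [RCLike 𝕜]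

lemma sum_sum_norm_sq_eq_re_trace (A : Matrix m n 𝕜) :
    ∑ i, ∑ j, ‖A i j‖ ^ 2 = RCLike.re (Aᴴ * A).trace := by
  simp only [trace, diag, mul_apply, conjTranspose_apply, RCLike.star_def, RCLike.conj_mul,
    map_sum, ← RCLike.ofReal_pow, RCLike.ofReal_re]
  exact Finset.sum_comm

lemma sum_sum_norm_sq_conjTranspose (A : Matrix m n 𝕜) :
    ∑ i, ∑ j, ‖Aᴴ i j‖ ^ 2 = ∑ i, ∑ j, ‖A i j‖ ^ 2 := by
  simp only [conjTranspose_apply, norm_star]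
  exact Finset.sum_comm

lemma sum_sum_norm_sq_unitary_mul [DecidableEq m] {U : Matrix m m 𝕜}
    (hU : U ∈ unitaryGroup m 𝕜) (A : Matrix m n 𝕜) :
    ∑ i, ∑ j, ‖(U * A) i j‖ ^ 2 = ∑ i, ∑ j, ‖A i j‖ ^ 2 := by
  rw [sum_sum_norm_sq_eq_re_trace, sum_sum_norm_sq_eq_re_trace, conjTranspose_mul,
    Matrix.mul_assoc, ← Matrix.mul_assoc Uᴴ, ← star_eq_conjTranspose,
    mem_unitaryGroup_iff'.mp hU, Matrix.one_mul]

lemma sum_sum_norm_sq_mul_unitary [DecidableEq n] {U : Matrix n n 𝕜}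
    (hU : U ∈ unitaryGroup n 𝕜) (A : Matrix m n 𝕜) :
    ∑ i, ∑ j, ‖(A * U) i j‖ ^ 2 = ∑ i, ∑ j, ‖A i j‖ ^ 2 := by
  rw [← sum_sum_norm_sq_conjTranspose, conjTranspose_mul, ← star_eq_conjTranspose,
    sum_sum_norm_sq_unitary_mul (Unitary.star_mem hU), sum_sum_norm_sq_conjTranspose]

lemma sum_sum_norm_sq_diagonal [DecidableEq n] (d : n → 𝕜) :
    ∑ i, ∑ j, ‖diagonal d i j‖ ^ 2 = ∑ i, ‖d i‖ ^ 2 := by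
  refine Finset.sum_congr rfl fun i _ => ?_
  rw [Finset.sum_eq_single i (fun j _ hj => by simp [diagonal_apply_ne _ (Ne.symm hj)]) (by simp),
    diagonal_apply_eq]

lemma sum_norm_sq_diag_le_sum_sum (A : Matrix n n 𝕜) :
    ∑ i, ‖A i i‖ ^ 2 ≤ ∑ i, ∑ j, ‖A i j‖ ^ 2 :=
  Finset.sum_le_sum fun i _ =>
    Finset.single_le_sum (f := fun j => ‖A i j‖ ^ 2) (fun _ _ => sq_nonneg _) (Finset.mem_univ i)

lemma norm_apply_le_l2_opNorm [DecidableEq n] (A : Matrix m n 𝕜) (i : m) (j : n) :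
    ‖A i j‖ ≤ ‖A‖ :=
  calc ‖A i j‖ = ‖(EuclideanSpace.equiv m 𝕜).symm (A *ᵥ EuclideanSpace.single j 1) i‖ := by
        simp
    _ ≤ ‖(EuclideanSpace.equiv m 𝕜).symm (A *ᵥ EuclideanSpace.single j 1)‖ :=
        PiLp.norm_apply_le _ _
    _ ≤ ‖A‖ * ‖EuclideanSpace.single j (1 : 𝕜)‖ := l2_opNorm_mulVec _ _
    _ = ‖A‖ := by simp

end Entrywise

variable {n 𝕜 : Type*} [Fintype n] [DecidableEq n] [RCLike 𝕜]

lemma l2_opNorm_unitary_mul_mul {U V : Matrix n n 𝕜} (hU : U ∈ unitaryGroup n 𝕜)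
    (hV : V ∈ unitaryGroup n 𝕜) (A : Matrix n n 𝕜) : ‖U * A * V‖ = ‖A‖ := by
  rw [CStarRing.norm_mul_mem_unitary _ hV, CStarRing.norm_mem_unitary_mul _ hU]

theorem sum_sum_norm_sq_diagonal_min_sub_le (σ : n → ℝ) {lam : ℝ} {W : Matrix n n 𝕜}
    (hW : ‖W‖ ≤ lam) :
    ∑ i, ∑ j,
        ‖(diagonal (fun i => ((min (σ i) lam : ℝ) : 𝕜)) - diagonal (fun i => (σ i : 𝕜))) i j‖ ^ 2
      ≤ ∑ i, ∑ j, ‖(W - diagonal (fun i => (σ i : 𝕜))) i j‖ ^ 2 := by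
  rw [diagonal_sub, sum_sum_norm_sq_diagonal]
  calc _ ≤ ∑ i, ‖(W - diagonal fun i => (σ i : 𝕜)) i i‖ ^ 2 :=
        Finset.sum_le_sum fun i _ => by
          gcongr
          simpa using RCLike.norm_ofReal_min_sub_le (σ i) ((norm_apply_le_l2_opNorm W i i).trans hW)
    _ ≤ _ := sum_norm_sq_diag_le_sum_sum _

end Matrix

lemma frobNorm_unitary_mul_mul {n : ℕ} {U V : Matrix (Fin n) (Fin n) ℂ}
    (hU : U ∈ unitaryGroup (Fin n) ℂ) (hV : V ∈ unitaryGroup (Fin n) ℂ)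
    (A : Matrix (Fin n) (Fin n) ℂ) : frobNorm (U * A * V) = frobNorm A := by
  rw [frobNorm, frobNorm, sum_sum_norm_sq_mul_unitary hV, sum_sum_norm_sq_unitary_mul hU]

/-- **Minimization of the Frobenius norm under a spectral norm constraint.**
If `M = U * diagonal σ * Vᴴ` is an SVD of `M` and `λ ≥ 0`, then
`X := U * diagonal (min (σ i) λ) * Vᴴ` satisfies `‖X‖₂ ≤ λ` and minimizes the
Frobenius distance to `M` over the spectral-norm ball of radius `λ`. -/
theorem stmt_6 {n : ℕ} (M U V : Matrix (Fin n) (Fin n) ℂ) (σ : Fin n → ℝ)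
    (hU : Uᴴ * U = 1) (hV : Vᴴ * V = 1) (hσ : ∀ i, 0 ≤ σ i)
    (hM : M = U * Matrix.diagonal (fun i => (σ i : ℂ)) * Vᴴ)
    (lam : ℝ) (hlam : 0 ≤ lam) :
    spectralNorm' (U * Matrix.diagonal (fun i => ((min (σ i) lam : ℝ) : ℂ)) * Vᴴ) ≤ lam ∧
      ∀ Z : Matrix (Fin n) (Fin n) ℂ, spectralNorm' Z ≤ lam →
        frobNorm (U * Matrix.diagonal (fun i => ((min (σ i) lam : ℝ) : ℂ)) * Vᴴ - M) ≤
          frobNorm (Z - M) := by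
  replace hU : U ∈ unitaryGroup (Fin n) ℂ := mem_unitaryGroup_iff'.mpr hU
  replace hV : V ∈ unitaryGroup (Fin n) ℂ := mem_unitaryGroup_iff'.mpr hV
  have hVstar : Vᴴ ∈ unitaryGroup (Fin n) ℂ := Unitary.star_mem hV
  refine ⟨?_, fun Z hZ => ?_⟩
  · rw [spectralNorm', ← cstar_norm_def, l2_opNorm_unitary_mul_mul hU hVstar, l2_opNorm_diagonal]
    refine (pi_norm_le_iff_of_nonneg hlam).mpr fun i => ?_
    rw [Complex.norm_real, Real.norm_of_nonneg (le_min (hσ i) hlam)]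
    exact min_le_right _ _
  · set W := Uᴴ * Z * V
    have hZW : Z = U * W * Vᴴ := by
      simp only [W, Matrix.mul_assoc, ← star_eq_conjTranspose, mem_unitaryGroup_iff.mp hV,
        Matrix.mul_one]
      rw [← Matrix.mul_assoc, mem_unitaryGroup_iff.mp hU, Matrix.one_mul]
    have hW : ‖W‖ ≤ lam := by
      rwa [l2_opNorm_unitary_mul_mul (U := Uᴴ) (Unitary.star_mem hU) hV, cstar_norm_def]
    rw [hM, hZW, ← sub_mul, ← mul_sub, ← sub_mul, ← mul_sub, frobNorm_unitary_mul_mul hU hVstar,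
      frobNorm_unitary_mul_mul hU hVstar]
    exact Real.sqrt_le_sqrt (sum_sum_norm_sq_diagonal_min_sub_le σ hW)
end

section
/- Let X = U * Matrix.diagonal (fun i => (σ i : ℂ)) * Vᴴ with U, V unitary n×n complex matrices and σ i ≥ 0 for all i, let λ ≥ 0, and let D_λ X := U * Matrix.diagonal (fun i => (min (σ i) λ : ℂ)) * Vᴴ. Suppose Y = U * Matrix.diagonal (fun i => (s i : ℂ)) * Vᴴ with 0 ≤ s i ≤ λ for all i. Then Re (trace (Yᴴ * (X − D_λX))) ≤ Re (trace (Xᴴ * (X − D_λX))). -/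
open Matrix

lemma stmt_8_aux {n : ℕ} (U V : Matrix (Fin n) (Fin n) ℂ)
    (hU : Uᴴ * U = 1) (hV : Vᴴ * V = 1) (a b : Fin n → ℝ) :
    Matrix.trace ((U * Matrix.diagonal (fun i => (a i : ℂ)) * Vᴴ)ᴴ *
      (U * Matrix.diagonal (fun i => (b i : ℂ)) * Vᴴ)) = ∑ i, ((a i * b i : ℝ) : ℂ) := by
  have h1 : (U * Matrix.diagonal (fun i => (a i : ℂ)) * Vᴴ)ᴴ *
      (U * Matrix.diagonal (fun i => (b i : ℂ)) * Vᴴ)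
      = V * (Matrix.diagonal (fun i => ((a i * b i : ℝ) : ℂ))) * Vᴴ := by
    have : (Matrix.diagonal (fun i => (a i : ℂ)))ᴴ = Matrix.diagonal (fun i => (a i : ℂ)) := by
      simp [diagonal_conjTranspose, Function.comp_def, Pi.star_def]
    calc (U * Matrix.diagonal (fun i => (a i : ℂ)) * Vᴴ)ᴴ *
          (U * Matrix.diagonal (fun i => (b i : ℂ)) * Vᴴ)
        = V * ((Matrix.diagonal (fun i => (a i : ℂ)))ᴴ * ((Uᴴ * U) *
            (Matrix.diagonal (fun i => (b i : ℂ)) * Vᴴ))) := by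
          simp only [conjTranspose_mul, conjTranspose_conjTranspose, Matrix.mul_assoc]
      _ = V * (Matrix.diagonal (fun i => ((a i * b i : ℝ) : ℂ))) * Vᴴ := by
          rw [hU, this]
          simp [← Matrix.mul_assoc, diagonal_mul_diagonal, Complex.ofReal_mul]
  rw [h1, Matrix.trace_mul_cycle, hV, Matrix.one_mul, Matrix.trace_diagonal]

/-- For `X = U * diagonal σ * Vᴴ` with `U, V` unitary and `σ ≥ 0`, the spectral
truncation `D_λ X = U * diagonal (min (σ i) λ) * Vᴴ`, and
`Y = U * diagonal s * Vᴴ` with `0 ≤ s i ≤ λ`, one has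
`Re (trace (Yᴴ * (X − D_λX))) ≤ Re (trace (Xᴴ * (X − D_λX)))`. -/
theorem stmt_8 {n : ℕ} (U V : Matrix (Fin n) (Fin n) ℂ) (σ s : Fin n → ℝ)
    (hU : Uᴴ * U = 1) (hV : Vᴴ * V = 1) (hσ : ∀ i, 0 ≤ σ i) (lam : ℝ) (hlam : 0 ≤ lam)
    (hs : ∀ i, 0 ≤ s i ∧ s i ≤ lam)
    (X DX Y : Matrix (Fin n) (Fin n) ℂ)
    (hX : X = U * Matrix.diagonal (fun i => (σ i : ℂ)) * Vᴴ)
    (hDX : DX = U * Matrix.diagonal (fun i => ((min (σ i) lam : ℝ) : ℂ)) * Vᴴ)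
    (hY : Y = U * Matrix.diagonal (fun i => (s i : ℂ)) * Vᴴ) :
    (Matrix.trace (Yᴴ * (X - DX))).re ≤ (Matrix.trace (Xᴴ * (X - DX))).re := by
  subst hX hDX hY
  rw [Matrix.mul_sub, Matrix.mul_sub, Matrix.trace_sub, Matrix.trace_sub,
    stmt_8_aux U V hU hV, stmt_8_aux U V hU hV, stmt_8_aux U V hU hV, stmt_8_aux U V hU hV]
  simp only [Complex.sub_re, Complex.re_sum, Complex.ofReal_re]
  rw [← Finset.sum_sub_distrib, ← Finset.sum_sub_distrib]
  apply Finset.sum_le_sum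
  intro i _
  have h1 : s i * σ i - s i * min (σ i) lam = s i * (σ i - min (σ i) lam) := by ring
  have h2 : σ i * σ i - σ i * min (σ i) lam = σ i * (σ i - min (σ i) lam) := by ring
  rw [h1, h2]
  rcases le_or_gt (σ i) lam with h | h
  · have : min (σ i) lam = σ i := min_eq_left h
    simp [this]
  · have hmin : min (σ i) lam = lam := min_eq_right h.le
    have := hs i
    apply mul_le_mul_of_nonneg_right (by linarith) (by rw [hmin]; linarith)
end

section
/- Let X = U * Matrix.diagonal (fun i => (σ i : ℂ)) * Vᴴ with U, V unitary n×n complex matrices and σ i ≥ 0 for all i, let λ ≥ 0, and let D_λ X := U * Matrix.diagonal (fun i => (min (σ i) λ : ℂ)) * Vᴴ be the spectral truncation of X at level λ. Then for every n×n complex matrix Y with spectral norm ‖Y‖₂ ≤ λ, the Frobenius inner product of X − Y with X − D_λX is nonnegative: Re (trace ((X − Y)ᴴ * (X − D_λX))) ≥ 0. -/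
/-!
Conjugating by the unitaries reduces everything to diagonal entries: with `M = Uᴴ * Y * V`,
the inner product equals `∑ i, (σ i - re (M i i)) * (σ i - min (σ i) λ)`. Each diagonal entry
of `M` is `⟪U eᵢ, Y (V eᵢ)⟫` between unit vectors, so `re (M i i) ≤ ‖Y‖₂ ≤ λ`, and every summand
is nonnegative: it vanishes when `σ i ≤ λ`, and otherwise both factors are nonnegative.
-/

open Matrix

namespace Matrix

section Norm

open WithLp

variable {𝕜 n : Type*} [RCLike 𝕜] [Fintype n]

theorem inner_toLp_transpose_mulVec (A B C : Matrix n n 𝕜) (i j : n) :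
    inner 𝕜 (toLp 2 (Aᵀ i)) (toLp 2 (B *ᵥ Cᵀ j)) = (Aᴴ * B * C) i j := by
  rw [Matrix.mul_assoc]
  simp only [EuclideanSpace.inner_toLp_toLp, dotProduct, mul_apply, mulVec, transpose_apply,
    conjTranspose_apply, Pi.star_apply]
  exact Finset.sum_congr rfl fun k _ => mul_comm _ _

theorem norm_toLp_transpose_of_conjTranspose_mul_self [DecidableEq n] {U : Matrix n n 𝕜}
    (hU : Uᴴ * U = 1) (i : n) : ‖toLp 2 (Uᵀ i)‖ = 1 := by
  have h := inner_toLp_transpose_mulVec U 1 U i i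
  rw [one_mulVec, Matrix.mul_one, hU, one_apply_eq, inner_self_eq_norm_sq_to_K] at h
  exact_mod_cast (pow_eq_one_iff_of_nonneg (norm_nonneg _) two_ne_zero).1 (by exact_mod_cast h)

theorem norm_diag_conjTranspose_mul_mul_le [DecidableEq n] {U V : Matrix n n 𝕜}
    (hU : Uᴴ * U = 1) (hV : Vᴴ * V = 1) (Y : Matrix n n 𝕜) (i : n) :
    ‖(Uᴴ * Y * V) i i‖ ≤ ‖toEuclideanCLM (n := n) (𝕜 := 𝕜) Y‖ := by
  rw [← inner_toLp_transpose_mulVec, ← toEuclideanCLM_toLp]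
  calc _ ≤ ‖toLp 2 (Uᵀ i)‖ * ‖toEuclideanCLM (n := n) (𝕜 := 𝕜) Y (toLp 2 (Vᵀ i))‖ :=
        norm_inner_le_norm _ _
    _ ≤ ‖toLp 2 (Uᵀ i)‖ * (‖toEuclideanCLM (n := n) (𝕜 := 𝕜) Y‖ * ‖toLp 2 (Vᵀ i)‖) := by
        gcongr; exact ContinuousLinearMap.le_opNorm _ _
    _ = _ := by
        rw [norm_toLp_transpose_of_conjTranspose_mul_self hU,
          norm_toLp_transpose_of_conjTranspose_mul_self hV, one_mul, mul_one]

end Norm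

section Trace

variable {R n : Type*} [CommRing R] [StarRing R] [Fintype n] [DecidableEq n]

theorem trace_conjTranspose_mul_mul_diagonal_mul (A U V : Matrix n n R) (d : n → R) :
    trace (Aᴴ * (U * diagonal d * Vᴴ)) = ∑ i, star ((Uᴴ * A * V) i i) * d i := by
  calc trace (Aᴴ * (U * diagonal d * Vᴴ)) = trace (Aᴴ * U * diagonal d * Vᴴ) := by
        simp only [Matrix.mul_assoc]
    _ = trace (Vᴴ * (Aᴴ * U * diagonal d)) := trace_mul_comm _ _
    _ = trace ((Uᴴ * A * V)ᴴ * diagonal d) := by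
        simp only [conjTranspose_mul, conjTranspose_conjTranspose, Matrix.mul_assoc]
    _ = ∑ i, star ((Uᴴ * A * V) i i) * d i := by
        simp only [trace, diag, mul_diagonal, conjTranspose_apply]

theorem conjTranspose_mul_mul_mul_diagonal_mul {U V : Matrix n n R}
    (hU : Uᴴ * U = 1) (hV : Vᴴ * V = 1) (d : n → R) :
    Uᴴ * (U * diagonal d * Vᴴ) * V = diagonal d := by
  rw [← Matrix.mul_assoc, ← Matrix.mul_assoc, hU, Matrix.one_mul, Matrix.mul_assoc, hV,
    Matrix.mul_one]

end Trace

end Matrix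

theorem sub_mul_sub_min_nonneg {s m l : ℝ} (hm : m ≤ l) : 0 ≤ (s - m) * (s - min s l) := by
  rcases le_total s l with hsl | hls
  · simp [min_eq_left hsl]
  · rw [min_eq_right hls]
    exact mul_nonneg (by linarith) (by linarith)

theorem stmt_9_general {n : ℕ} (U V : Matrix (Fin n) (Fin n) ℂ) (σ : Fin n → ℝ)
    (hU : Uᴴ * U = 1) (hV : Vᴴ * V = 1) (lam : ℝ)
    (X DX : Matrix (Fin n) (Fin n) ℂ)
    (hX : X = U * Matrix.diagonal (fun i => (σ i : ℂ)) * Vᴴ)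
    (hDX : DX = U * Matrix.diagonal (fun i => ((min (σ i) lam : ℝ) : ℂ)) * Vᴴ) :
    ∀ Y : Matrix (Fin n) (Fin n) ℂ, spectralNorm' Y ≤ lam →
      0 ≤ (Matrix.trace ((X - Y)ᴴ * (X - DX))).re := by
  intro Y hY
  have hXDX : X - DX = U * diagonal (fun i => ((σ i - min (σ i) lam : ℝ) : ℂ)) * Vᴴ := by
    rw [hX, hDX, ← Matrix.sub_mul, ← Matrix.mul_sub, diagonal_sub]
    push_cast; rfl
  have hcompress : Uᴴ * (X - Y) * V = diagonal (fun i => (σ i : ℂ)) - Uᴴ * Y * V := by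
    rw [Matrix.mul_sub, Matrix.sub_mul, hX, conjTranspose_mul_mul_mul_diagonal_mul hU hV]
  rw [hXDX, trace_conjTranspose_mul_mul_diagonal_mul, hcompress, Complex.re_sum]
  refine Finset.sum_nonneg fun i _ => ?_
  have hre : ((Uᴴ * Y * V) i i).re ≤ lam :=
    (Complex.re_le_norm _).trans ((norm_diag_conjTranspose_mul_mul_le hU hV Y i).trans hY)
  simpa [Complex.mul_re] using sub_mul_sub_min_nonneg (s := σ i) hre

/-- For `X = U * diagonal σ * Vᴴ` with `U, V` unitary and `σ ≥ 0`, and the spectral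
truncation `D_λ X = U * diagonal (min (σ i) λ) * Vᴴ`: for every `Y` with `‖Y‖₂ ≤ λ`,
the Frobenius inner product of `X − Y` with `X − D_λ X` is nonnegative. -/
theorem stmt_9 {n : ℕ} (U V : Matrix (Fin n) (Fin n) ℂ) (σ : Fin n → ℝ)
    (hU : Uᴴ * U = 1) (hV : Vᴴ * V = 1) (hσ : ∀ i, 0 ≤ σ i) (lam : ℝ) (hlam : 0 ≤ lam)
    (X DX : Matrix (Fin n) (Fin n) ℂ)
    (hX : X = U * Matrix.diagonal (fun i => (σ i : ℂ)) * Vᴴ)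
    (hDX : DX = U * Matrix.diagonal (fun i => ((min (σ i) lam : ℝ) : ℂ)) * Vᴴ) :
    ∀ Y : Matrix (Fin n) (Fin n) ℂ, spectralNorm' Y ≤ lam →
      0 ≤ (Matrix.trace ((X - Y)ᴴ * (X - DX))).re :=
  stmt_9_general U V σ hU hV lam X DX hX hDX
end

section
/- (Orthogonal Procrustes problem.) Let M be an n×n complex matrix with singular value decomposition M = U * Matrix.diagonal (fun i => (σ i : ℂ)) * Vᴴ, where U and V are unitary and σ i ≥ 0 for all i. Define X := U * Vᴴ. Then Xᴴ * X = 1, and for every n×n complex matrix Z with Zᴴ * Z = 1 one has ‖X − M‖_F ≤ ‖Z − M‖_F. -/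
/-!
For unitary `Z`, `‖Z - M‖_F² = n + ‖M‖_F² - 2 Re tr (Zᴴ M)`, so `Z` is optimal iff it maximizes
`Re tr (Zᴴ M)`. Writing `M = U Σ Vᴴ`, the cyclicity of the trace gives
`tr (Zᴴ M) = tr (W Σ) = ∑ i, W i i σ i` with `W = Vᴴ Zᴴ U` unitary; entries of a unitary matrix
have modulus at most `1`, so `Re tr (Zᴴ M) ≤ ∑ i, σ i`, with equality when `W = 1`, i.e. `Z = U Vᴴ`.
-/

open Matrix

namespace Matrix

variable {𝕜 m n : Type*} [RCLike 𝕜] [Fintype m] [Fintype n]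

open RCLike

theorem re_trace_conjTranspose_mul_self (A : Matrix m n 𝕜) :
    re (Aᴴ * A).trace = ∑ i, ∑ j, ‖A i j‖ ^ 2 := by
  simp only [trace, diag, mul_apply, conjTranspose_apply, map_sum, RCLike.star_def,
    RCLike.conj_mul, ← RCLike.ofReal_pow, RCLike.ofReal_re]
  exact Finset.sum_comm

theorem re_trace_conjTranspose_sub_mul_sub (Z M : Matrix m n 𝕜) :
    re ((Z - M)ᴴ * (Z - M)).trace =
      re (Zᴴ * Z).trace + re (Mᴴ * M).trace - 2 * re (Zᴴ * M).trace := by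
  have hMZ : re (Mᴴ * Z).trace = re (Zᴴ * M).trace := by
    rw [← conjTranspose_conjTranspose M, ← conjTranspose_mul, trace_conjTranspose,
      conjTranspose_conjTranspose, RCLike.star_def, conj_re]
  rw [conjTranspose_sub, Matrix.sub_mul, Matrix.mul_sub, Matrix.mul_sub]
  simp only [trace_sub, map_sub, hMZ]
  ring

variable [DecidableEq n]

theorem re_trace_conjTranspose_sub_mul_sub_of_mem_unitaryGroup {Z : Matrix n n 𝕜}
    (hZ : Z ∈ unitaryGroup n 𝕜) (M : Matrix n n 𝕜) :
    re ((Z - M)ᴴ * (Z - M)).trace =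
      Fintype.card n + re (Mᴴ * M).trace - 2 * re (Zᴴ * M).trace := by
  rw [re_trace_conjTranspose_sub_mul_sub, ← star_eq_conjTranspose,
    (mem_unitaryGroup_iff' ..).mp hZ, trace_one]
  simp

theorem re_trace_mul_diagonal_le_of_mem_unitaryGroup {W : Matrix n n 𝕜}
    (hW : W ∈ unitaryGroup n 𝕜) {σ : n → ℝ} (hσ : ∀ i, 0 ≤ σ i) :
    re (W * diagonal fun i => (σ i : 𝕜)).trace ≤ ∑ i, σ i := by
  simp only [trace, diag, mul_diagonal, map_sum, re_mul_ofReal]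
  refine Finset.sum_le_sum fun i _ => mul_le_of_le_one_left (hσ i) ?_
  exact (re_le_norm _).trans (entry_norm_bound_of_unitary hW i i)

theorem re_trace_conjTranspose_mul_svd_le {U V Z : Matrix n n 𝕜} (hU : U ∈ unitaryGroup n 𝕜)
    (hV : V ∈ unitaryGroup n 𝕜) (hZ : Z ∈ unitaryGroup n 𝕜) {σ : n → ℝ} (hσ : ∀ i, 0 ≤ σ i) :
    re (Zᴴ * (U * diagonal (fun i => (σ i : 𝕜)) * Vᴴ)).trace ≤ ∑ i, σ i := by
  have hW : Vᴴ * Zᴴ * U ∈ unitaryGroup n 𝕜 :=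
    mul_mem (mul_mem (Unitary.star_mem hV) (Unitary.star_mem hZ)) hU
  calc re (Zᴴ * (U * diagonal (fun i => (σ i : 𝕜)) * Vᴴ)).trace
      = re (Vᴴ * Zᴴ * U * diagonal fun i => (σ i : 𝕜)).trace := by
        simp only [Matrix.mul_assoc]
        rw [trace_mul_comm Vᴴ]
        simp only [Matrix.mul_assoc]
    _ ≤ ∑ i, σ i := re_trace_mul_diagonal_le_of_mem_unitaryGroup hW hσ

theorem trace_conjTranspose_mul_mul_conjTranspose {U V : Matrix n n 𝕜}
    (hU : U ∈ unitaryGroup n 𝕜) (hV : V ∈ unitaryGroup n 𝕜) (D : Matrix n n 𝕜) :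
    ((U * Vᴴ)ᴴ * (U * D * Vᴴ)).trace = D.trace := by
  have hU' : Uᴴ * U = 1 := mem_unitaryGroup_iff'.mp hU
  have hV' : Vᴴ * V = 1 := mem_unitaryGroup_iff'.mp hV
  calc ((U * Vᴴ)ᴴ * (U * D * Vᴴ)).trace = (V * (Uᴴ * U) * D * Vᴴ).trace := by
        simp only [conjTranspose_mul, conjTranspose_conjTranspose, Matrix.mul_assoc]
    _ = (Vᴴ * V * D).trace := by
        rw [hU', Matrix.mul_one, trace_mul_comm, Matrix.mul_assoc]
    _ = D.trace := by rw [hV', Matrix.one_mul]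

end Matrix

theorem frobNorm_eq_sqrt_re_trace {n : ℕ} (A : Matrix (Fin n) (Fin n) ℂ) :
    frobNorm A = √(RCLike.re (Aᴴ * A).trace) := by
  rw [frobNorm, re_trace_conjTranspose_mul_self, Finset.sum_comm]

/-- **Orthogonal Procrustes problem.** If `M = U * diagonal σ * Vᴴ` is an SVD of `M`,
then `X := U * Vᴴ` satisfies `Xᴴ * X = 1` and minimizes the Frobenius distance to `M`
over all matrices `Z` with `Zᴴ * Z = 1`. -/
theorem stmt_14 {n : ℕ} (M U V : Matrix (Fin n) (Fin n) ℂ) (σ : Fin n → ℝ)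
    (hU : Uᴴ * U = 1) (hV : Vᴴ * V = 1) (hσ : ∀ i, 0 ≤ σ i)
    (hM : M = U * Matrix.diagonal (fun i => (σ i : ℂ)) * Vᴴ) :
    (U * Vᴴ)ᴴ * (U * Vᴴ) = 1 ∧
      ∀ Z : Matrix (Fin n) (Fin n) ℂ, Zᴴ * Z = 1 →
        frobNorm (U * Vᴴ - M) ≤ frobNorm (Z - M) := by
  have hU : U ∈ unitaryGroup (Fin n) ℂ := mem_unitaryGroup_iff'.mpr hU
  have hV : V ∈ unitaryGroup (Fin n) ℂ := mem_unitaryGroup_iff'.mpr hV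
  have hX : U * Vᴴ ∈ unitaryGroup (Fin n) ℂ := mul_mem hU (Unitary.star_mem hV)
  refine ⟨mem_unitaryGroup_iff'.mp hX, fun Z hZ => ?_⟩
  have hZ : Z ∈ unitaryGroup (Fin n) ℂ := mem_unitaryGroup_iff'.mpr hZ
  have hmax : RCLike.re (Zᴴ * M).trace ≤ ∑ i, σ i := by
    rw [hM]
    exact re_trace_conjTranspose_mul_svd_le hU hV hZ hσ
  have hmax_attained : RCLike.re ((U * Vᴴ)ᴴ * M).trace = ∑ i, σ i := by
    rw [hM, trace_conjTranspose_mul_mul_conjTranspose hU hV]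
    simp [trace_diagonal]
  rw [frobNorm_eq_sqrt_re_trace, frobNorm_eq_sqrt_re_trace,
    re_trace_conjTranspose_sub_mul_sub_of_mem_unitaryGroup hX,
    re_trace_conjTranspose_sub_mul_sub_of_mem_unitaryGroup hZ]
  exact Real.sqrt_le_sqrt (by linarith)
end
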